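/- Fix $d\geq 1$, $\lambda>0$, $\alpha>0$, positive reals $\nu_1,\dots,\nu_d$, a probability vector $p$, and a substochastic matrix $P$ with zero diagonal. For nonnegative integer vectors $N,q,z\in\mathbb{Z}_+^d$ with $N=q+z$, define $(GL)(N,q,z)=\sum_i\lambda p_i\big(L(N+e^{(i)})-L(N)\big)+\sum_i\alpha q_i\big(L(N-e^{(i)})-L(N)\big)+\sum_i\nu_i z_i\big[\sum_jP_{ij}L(N+e^{(j)}-e^{(i)})+(1-\sum_jP_{ij})L(N-e^{(i)})-L(N)\big]$, where $L(N)=\exp(e^TN)$. Then $(GL)(N,q,z)\leq\lambda(e-1)L(N)-\alpha\,(e^Tq)\,(1-e^{-1})\,L(N)$. -/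

import Mathlib

/-!
With `L N = exp (eᵀN)`, every transition of the chain multiplies `L` by a fixed factor: an arrival
by `e`, an abandonment or a service completion that leaves the system by `e⁻¹`, and a routing
`N ↦ N - e⁽ⁱ⁾ + e⁽ʲ⁾` by `1`. Hence the arrival part of `GL` is exactly `λ (e - 1) L N`, the
abandonment part is exactly `-α (eᵀq) (1 - e⁻¹) L N`, and each service term equals
`ν i z i (∑ⱼ Pᵢⱼ - 1)(1 - e⁻¹) L N ≤ 0` because the rows of `P` sum to at most one.
-/

open Finset

section

variable {ι : Type*} [DecidableEq ι]

theorem sub_single_add_single_cancel {M : ι → ℕ} {i : ι} (h : 1 ≤ M i) :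
    M - Pi.single i 1 + Pi.single i 1 = M := by
  ext j
  rcases eq_or_ne j i with rfl | hj
  · simpa using Nat.sub_add_cancel h
  · simp [hj]

variable [Fintype ι]

noncomputable def expTotal (M : ι → ℕ) : ℝ := Real.exp (∑ i, (M i : ℝ))

theorem expTotal_add_single (M : ι → ℕ) (i : ι) :
    expTotal (M + Pi.single i 1) = Real.exp 1 * expTotal M := by
  have hsingle : ∑ j, ((Pi.single i 1 : ι → ℕ) j : ℝ) = 1 := by
    rw [← Nat.cast_sum, Finset.sum_pi_single']
    simp
  simp only [expTotal, Pi.add_apply, Nat.cast_add, Finset.sum_add_distrib, hsingle,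
    Real.exp_add, mul_comm]

theorem expTotal_sub_single {M : ι → ℕ} {i : ι} (h : 1 ≤ M i) :
    expTotal (M - Pi.single i 1) = Real.exp (-1) * expTotal M := by
  conv_rhs => rw [← sub_single_add_single_cancel h, expTotal_add_single, ← mul_assoc,
    ← Real.exp_add]
  simp

theorem expTotal_sub_single_add_single {M : ι → ℕ} {i : ι} (h : 1 ≤ M i) (j : ι) :
    expTotal (M - Pi.single i 1 + Pi.single j 1) = expTotal M := by
  rw [expTotal_add_single, expTotal_sub_single h, ← mul_assoc, ← Real.exp_add]
  simp

theorem arrival_drift_eq (lam : ℝ) (p : ι → ℝ) (hpsum : ∑ i, p i = 1) (N : ι → ℕ) :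
    ∑ i, lam * p i * (expTotal (N + Pi.single i 1) - expTotal N)
      = lam * (Real.exp 1 - 1) * expTotal N := by
  simp only [expTotal_add_single]
  rw [← Finset.sum_mul, ← Finset.mul_sum, hpsum]
  ring

/-- Only phases with `q i ≠ 0` contribute, and for those `N - e⁽ⁱ⁾` does not truncate. -/
theorem abandonment_drift_eq (α : ℝ) {q N : ι → ℕ} (hq : q ≤ N) :
    ∑ i, α * (q i : ℝ) * (expTotal (N - Pi.single i 1) - expTotal N)
      = -(α * (∑ i, (q i : ℝ)) * (1 - Real.exp (-1)) * expTotal N) := by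
  have hterm : ∀ i, α * (q i : ℝ) * (expTotal (N - Pi.single i 1) - expTotal N)
      = -(α * (q i : ℝ) * (1 - Real.exp (-1)) * expTotal N) := by
    intro i
    rcases Nat.eq_zero_or_pos (q i) with h | h
    · simp [h]
    · rw [expTotal_sub_single (h.trans_le (hq i))]
      ring
  rw [Finset.sum_congr rfl fun i _ => hterm i, Finset.sum_neg_distrib, Finset.mul_sum,
    Finset.sum_mul, Finset.sum_mul]

theorem service_increment_eq (P : ι → ι → ℝ) {N : ι → ℕ} {i : ι} (h : 1 ≤ N i) :
    (∑ j, P i j * expTotal (N - Pi.single i 1 + Pi.single j 1))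
        + (1 - ∑ j, P i j) * expTotal (N - Pi.single i 1) - expTotal N
      = (∑ j, P i j - 1) * (1 - Real.exp (-1)) * expTotal N := by
  simp only [expTotal_sub_single_add_single h, expTotal_sub_single h]
  rw [← Finset.sum_mul]
  ring

theorem service_drift_nonpos (ν : ι → ℝ) (hν : ∀ i, 0 ≤ ν i) (P : ι → ι → ℝ)
    (hProw : ∀ i, ∑ j, P i j ≤ 1) {z N : ι → ℕ} (hz : z ≤ N) :
    ∑ i, ν i * (z i : ℝ) *
        ((∑ j, P i j * expTotal (N - Pi.single i 1 + Pi.single j 1))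
          + (1 - ∑ j, P i j) * expTotal (N - Pi.single i 1) - expTotal N) ≤ 0 := by
  refine Finset.sum_nonpos fun i _ => ?_
  rcases Nat.eq_zero_or_pos (z i) with h | h
  · simp [h]
  rw [service_increment_eq P (h.trans_le (hz i))]
  have hexp : Real.exp (-1) ≤ 1 := Real.exp_le_one_iff.mpr (by norm_num)
  refine mul_nonpos_of_nonneg_of_nonpos (mul_nonneg (hν i) (Nat.cast_nonneg _)) ?_
  exact mul_nonpos_of_nonpos_of_nonneg
    (mul_nonpos_of_nonpos_of_nonneg (by linarith [hProw i]) (by linarith))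
    (Real.exp_pos _).le

end

theorem stmt_13_general (d : ℕ) (lam α : ℝ)
    (ν p : Fin d → ℝ) (hν : ∀ i, 0 < ν i)
    (hpsum : ∑ i, p i = 1)
    (P : Matrix (Fin d) (Fin d) ℝ)
    (hProw : ∀ i, ∑ j, P i j ≤ 1)
    (N q z : Fin d → ℕ) (hNqz : N = q + z)
    (L : (Fin d → ℕ) → ℝ) (hL : ∀ M, L M = Real.exp (∑ i, (M i : ℝ)))
    (GLval : ℝ)
    (hGL : GLval =
      (∑ i, lam * p i * (L (N + Pi.single i 1) - L N))
      + (∑ i, α * (q i : ℝ) * (L (N - Pi.single i 1) - L N))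
      + (∑ i, ν i * (z i : ℝ) *
          ((∑ j, P i j * L (N - Pi.single i 1 + Pi.single j 1))
            + (1 - ∑ j, P i j) * L (N - Pi.single i 1) - L N))) :
    GLval ≤ lam * (Real.exp 1 - 1) * L N
        - α * (∑ i, (q i : ℝ)) * (1 - Real.exp (-1)) * L N := by
  obtain rfl : L = expTotal := funext hL
  have hq : q ≤ N := hNqz ▸ fun i => Nat.le_add_right (q i) (z i)
  have hz : z ≤ N := hNqz ▸ fun i => Nat.le_add_left (z i) (q i)
  rw [hGL, arrival_drift_eq lam p hpsum N, abandonment_drift_eq α hq]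
  linarith [service_drift_nonpos ν (fun i => (hν i).le) P hProw hz]

theorem stmt_13 (d : ℕ) (hd : 1 ≤ d) (lam α : ℝ) (hlam : 0 < lam) (hα : 0 < α)
    (ν p : Fin d → ℝ) (hν : ∀ i, 0 < ν i)
    (hp : ∀ i, 0 ≤ p i) (hpsum : ∑ i, p i = 1)
    (P : Matrix (Fin d) (Fin d) ℝ)
    (hPnonneg : ∀ i j, 0 ≤ P i j) (hProw : ∀ i, ∑ j, P i j ≤ 1)
    (hPdiag : ∀ i, P i i = 0)
    (N q z : Fin d → ℕ) (hNqz : N = q + z)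
    (L : (Fin d → ℕ) → ℝ) (hL : ∀ M, L M = Real.exp (∑ i, (M i : ℝ)))
    (GLval : ℝ)
    (hGL : GLval =
      (∑ i, lam * p i * (L (N + Pi.single i 1) - L N))
      + (∑ i, α * (q i : ℝ) * (L (N - Pi.single i 1) - L N))
      + (∑ i, ν i * (z i : ℝ) *
          ((∑ j, P i j * L (N - Pi.single i 1 + Pi.single j 1))
            + (1 - ∑ j, P i j) * L (N - Pi.single i 1) - L N))) :
    GLval ≤ lam * (Real.exp 1 - 1) * L N
        - α * (∑ i, (q i : ℝ)) * (1 - Real.exp (-1)) * L N :=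
  stmt_13_general d lam α ν p hν hpsum P hProw N q z hNqz L hL GLval hGL
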